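/- Let d ≥ 1, let n = 2d, and let Δ be a well-distributed f-simplicial complex on [n]. Then Δ is equal to its own Alexander dual: Δ^∨ = Δ. -/

import Mathlib

open Finset

/-- `Δ`, given as the finset of its faces, is a simplicial complex on the vertex
set `Fin n`: a nonempty collection of subsets closed under taking subsets. -/
def IsComplex {n : ℕ} (Δ : Finset (Finset (Fin n))) : Prop :=
  Δ.Nonempty ∧ ∀ A ∈ Δ, ∀ B ⊆ A, B ∈ Δ

/-- The facets (maximal faces) of `Δ`. -/
def facets {n : ℕ} (Δ : Finset (Finset (Fin n))) : Finset (Finset (Fin n)) :=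
  Δ.filter fun F => ∀ G ∈ Δ, F ⊆ G → F = G

/-- The simplicial complex generated by a family `𝔉`: all subsets of members of `𝔉`. -/
def generated {n : ℕ} (𝔉 : Finset (Finset (Fin n))) : Finset (Finset (Fin n)) :=
  univ.filter fun A => ∃ F ∈ 𝔉, A ⊆ F

/-- The Newton complement dual `Δ^c`: the complex generated by the complements
of the facets of `Δ`. -/
def cdual {n : ℕ} (Δ : Finset (Finset (Fin n))) : Finset (Finset (Fin n)) :=
  generated ((facets Δ).image fun F => Fᶜ)

/-- The nonface complex of `Δ`: all subsets of `[n]` containing no facet of `Δ`. -/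
def nonfaceComplex {n : ℕ} (Δ : Finset (Finset (Fin n))) : Finset (Finset (Fin n)) :=
  univ.filter fun A => ∀ F ∈ facets Δ, ¬ F ⊆ A

/-- `Δ` is an `f`-simplicial complex: for every `k`, `Δ` and its nonface complex
have the same number of `k`-element members (the same `f`-vector). -/
def IsFComplex {n : ℕ} (Δ : Finset (Finset (Fin n))) : Prop :=
  ∀ k : ℕ, (Δ.filter fun A => A.card = k).card =
    ((nonfaceComplex Δ).filter fun A => A.card = k).card

/-- `Δ` is pure `(d-1)`-dimensional: every facet has exactly `d` elements. -/
def PureDim {n : ℕ} (d : ℕ) (Δ : Finset (Finset (Fin n))) : Prop :=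
  ∀ F ∈ facets Δ, F.card = d

/-- The minimal nonfaces of `Δ`: sets that are not faces but all of whose proper
subsets are faces. -/
def minNonfaces {n : ℕ} (Δ : Finset (Finset (Fin n))) : Finset (Finset (Fin n)) :=
  univ.filter fun A => A ∉ Δ ∧ ∀ B ⊂ A, B ∈ Δ

/-- The Alexander dual `Δ^∨`: the complex whose facets are the complements of the
minimal nonfaces of `Δ`. -/
def adual {n : ℕ} (Δ : Finset (Finset (Fin n))) : Finset (Finset (Fin n)) :=
  generated ((minNonfaces Δ).image fun F => Fᶜ)

/-- The homogeneous complement `Δ'` (in degree `e`): the complex generated by the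
`e`-element subsets of `[n]` that are not facets of `Δ`. -/
def hcompl {n : ℕ} (e : ℕ) (Δ : Finset (Finset (Fin n))) : Finset (Finset (Fin n)) :=
  generated (univ.filter fun A : Finset (Fin n) => A.card = e ∧ A ∉ facets Δ)

/-!
For any complex, `A ∈ Δ^∨ ↔ Aᶜ ∉ Δ`, so it suffices to show `A ∈ Δ ↔ Aᶜ ∉ Δ`. Comparing
`f`-vectors in degree `k < d` shows that every set with fewer than `d` elements is a face,
and purity excludes sets with more than `d` elements; this settles every `A` with `#A ≠ d`.
In degree `d` the comparison gives `2 · #F(Δ) = (2d choose d)`, while well-distributedness says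
that no facet has a facet as complement. Hence the facets and their complements partition the
`d`-subsets of `[2d]`, which is the claim for `#A = d`.
-/

section

variable {n d : ℕ} {Δ : Finset (Finset (Fin n))} {A : Finset (Fin n)}

@[simp]
lemma mem_generated {𝔉 : Finset (Finset (Fin n))} : A ∈ generated 𝔉 ↔ ∃ F ∈ 𝔉, A ⊆ F := by
  simp [generated]

lemma mem_facets_iff : A ∈ facets Δ ↔ A ∈ Δ ∧ ∀ G ∈ Δ, A ⊆ G → A = G := mem_filter

lemma exists_facet_superset (hA : A ∈ Δ) : ∃ F ∈ facets Δ, A ⊆ F := by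
  obtain ⟨F, hAF, hF⟩ := Δ.exists_le_maximal hA
  exact ⟨F, mem_facets_iff.2 ⟨hF.1, fun _ hG hFG => hF.eq_of_le hG hFG⟩, hAF⟩

lemma card_le_of_mem (hpure : PureDim d Δ) (hA : A ∈ Δ) : #A ≤ d := by
  obtain ⟨F, hF, hAF⟩ := exists_facet_superset hA
  exact (card_le_card hAF).trans_eq (hpure F hF)

lemma mem_facets_iff_card_eq (hpure : PureDim d Δ) : A ∈ facets Δ ↔ A ∈ Δ ∧ #A = d := by
  refine ⟨fun h => ⟨(mem_facets_iff.1 h).1, hpure A h⟩, fun ⟨hA, hcard⟩ => ?_⟩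
  exact mem_facets_iff.2
    ⟨hA, fun G hG hAG => eq_of_subset_of_card_le hAG (hcard ▸ card_le_of_mem hpure hG)⟩

lemma facets_generated_of_card_eq {𝔉 : Finset (Finset (Fin n))} {k : ℕ}
    (h𝔉 : ∀ F ∈ 𝔉, #F = k) : facets (generated 𝔉) = 𝔉 := by
  ext G
  simp only [mem_facets_iff, mem_generated]
  constructor
  · rintro ⟨⟨F, hF, hGF⟩, hmax⟩
    rwa [hmax F ⟨F, hF, subset_rfl⟩ hGF]
  · refine fun hG => ⟨⟨G, hG, subset_rfl⟩, ?_⟩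
    rintro H ⟨F, hF, hHF⟩ hGH
    obtain rfl : G = F :=
      eq_of_subset_of_card_le (hGH.trans hHF) (by rw [h𝔉 G hG, h𝔉 F hF])
    exact subset_antisymm hGH hHF

lemma facets_cdual (hpure : PureDim d Δ) : facets (cdual Δ) = (facets Δ).image fun F => Fᶜ := by
  refine facets_generated_of_card_eq (k := n - d) ?_
  simp only [mem_image, forall_exists_index, and_imp, forall_apply_eq_imp_iff₂]
  intro F hF
  rw [card_compl, Fintype.card_fin, hpure F hF]

lemma compl_notMem_facets (hpure : PureDim d Δ) (hwd : facets Δ ∩ facets (cdual Δ) = ∅)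
    (hA : A ∈ facets Δ) : Aᶜ ∉ facets Δ := by
  intro hAc
  have hA' : A ∈ facets (cdual Δ) := by
    rw [facets_cdual hpure]
    exact mem_image.2 ⟨Aᶜ, hAc, compl_compl A⟩
  simpa [hwd] using mem_inter.2 ⟨hA, hA'⟩

lemma IsFComplex.mem_of_card_lt (hf : IsFComplex Δ) (hpure : PureDim d Δ) (hA : #A < d) :
    A ∈ Δ := by
  have hnonfaces : {B ∈ nonfaceComplex Δ | #B = #A} = powersetCard #A univ := by
    ext B
    simp only [nonfaceComplex, mem_filter, mem_univ, true_and, mem_powersetCard_univ,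
      and_iff_right_iff_imp]
    intro hB F hF hFB
    have := card_le_card hFB
    rw [hpure F hF] at this
    omega
  have hsub : {B ∈ Δ | #B = #A} ⊆ powersetCard #A univ :=
    fun B hB => mem_powersetCard_univ.2 (mem_filter.1 hB).2
  have hfaces := eq_of_subset_of_card_le hsub (by rw [hf, hnonfaces])
  exact (mem_filter.1 (hfaces ▸ mem_powersetCard_univ.2 rfl : A ∈ {B ∈ Δ | #B = #A})).1

lemma IsFComplex.two_mul_card_facets (hf : IsFComplex Δ) (hpure : PureDim d Δ) :
    2 * #(facets Δ) = n.choose d := by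
  have hfaces : {A ∈ Δ | #A = d} = facets Δ := by
    ext A
    rw [mem_filter, mem_facets_iff_card_eq hpure]
  have hsub : facets Δ ⊆ powersetCard d univ := fun F hF => mem_powersetCard_univ.2 (hpure F hF)
  have hnonfaces : {A ∈ nonfaceComplex Δ | #A = d} = powersetCard d univ \ facets Δ := by
    ext A
    simp only [nonfaceComplex, mem_filter, mem_sdiff, mem_univ, true_and, mem_powersetCard_univ]
    constructor
    · exact fun ⟨hA, hcard⟩ => ⟨hcard, fun hfacet => hA A hfacet subset_rfl⟩
    · rintro ⟨hcard, hA⟩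
      refine ⟨fun F hF hFA => hA ?_, hcard⟩
      rwa [← eq_of_subset_of_card_le hFA (by rw [hpure F hF, hcard])]
  have hcount := hf d
  rw [hfaces, hnonfaces, card_sdiff_of_subset hsub, card_powersetCard, card_fin] at hcount
  have := card_le_card hsub
  rw [card_powersetCard, card_fin] at this
  omega

lemma mem_facets_or_compl_mem_facets (hn : n = 2 * d) (hf : IsFComplex Δ)
    (hpure : PureDim d Δ) (hwd : facets Δ ∩ facets (cdual Δ) = ∅) (hA : #A = d) :
    A ∈ facets Δ ∨ Aᶜ ∈ facets Δ := by
  have hcompl_card : ∀ F : Finset (Fin n), #F = d → #Fᶜ = d := fun F hF => by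
    rw [card_compl, Fintype.card_fin, hF]
    omega
  have hdisj : Disjoint (facets Δ) ((facets Δ).image fun F => Fᶜ) := by
    rw [disjoint_right]
    rintro _ hFc hF
    obtain ⟨F, hF', rfl⟩ := mem_image.1 hFc
    exact compl_notMem_facets hpure hwd hF' hF
  have hsub : facets Δ ∪ (facets Δ).image (fun F => Fᶜ) ⊆ powersetCard d univ := by
    intro B hB
    rw [mem_powersetCard_univ]
    obtain hB | hB := mem_union.1 hB
    · exact hpure B hB
    · obtain ⟨F, hF, rfl⟩ := mem_image.1 hB
      exact hcompl_card F (hpure F hF)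
  have hpartition := eq_of_subset_of_card_le hsub <| by
    rw [card_union_of_disjoint hdisj, card_image_of_injective _ compl_injective,
      card_powersetCard, card_fin, ← two_mul, hf.two_mul_card_facets hpure]
  rw [← mem_powersetCard_univ, ← hpartition, mem_union, mem_image] at hA
  refine hA.imp_right fun ⟨F, hF, hFA⟩ => ?_
  rwa [← hFA, compl_compl]

theorem mem_iff_compl_notMem (hn : n = 2 * d) (hf : IsFComplex Δ) (hpure : PureDim d Δ)
    (hwd : facets Δ ∩ facets (cdual Δ) = ∅) : A ∈ Δ ↔ Aᶜ ∉ Δ := by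
  have hcompl_card : #Aᶜ = n - #A := by rw [card_compl, Fintype.card_fin]
  have hA_le : #A ≤ n := card_le_univ A |>.trans_eq (Fintype.card_fin n)
  rcases lt_trichotomy #A d with hlt | heq | hgt
  · have hAc : Aᶜ ∉ Δ := fun h => by have := card_le_of_mem hpure h; omega
    simp [hf.mem_of_card_lt hpure hlt, hAc]
  · have hAc : #Aᶜ = d := by omega
    have hfacet : ∀ {B : Finset (Fin n)}, #B = d → (B ∈ Δ ↔ B ∈ facets Δ) := fun hB => by
      rw [mem_facets_iff_card_eq hpure, and_iff_left hB]
    rw [hfacet heq, hfacet hAc]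
    exact ⟨compl_notMem_facets hpure hwd,
      (mem_facets_or_compl_mem_facets hn hf hpure hwd heq).resolve_right⟩
  · have hA : A ∉ Δ := fun h => by have := card_le_of_mem hpure h; omega
    simp [hA, hf.mem_of_card_lt hpure (by omega : #Aᶜ < d)]

lemma exists_minNonfaces_subset {B : Finset (Fin n)} (hB : B ∉ Δ) :
    ∃ N ∈ minNonfaces Δ, N ⊆ B := by
  obtain ⟨N, hNB, hN⟩ := exists_le_minimal {C | C ∉ Δ} (mem_filter.2 ⟨mem_univ B, hB⟩)
  refine ⟨N, mem_filter.2 ⟨mem_univ N, (mem_filter.1 hN.1).2, fun C hCN => ?_⟩, hNB⟩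
  by_contra hC
  exact hN.not_prop_of_lt hCN (mem_filter.2 ⟨mem_univ C, hC⟩)

lemma mem_adual_iff (hΔ : ∀ A ∈ Δ, ∀ B ⊆ A, B ∈ Δ) : A ∈ adual Δ ↔ Aᶜ ∉ Δ := by
  simp only [adual, mem_generated, mem_image, exists_exists_and_eq_and]
  constructor
  · rintro ⟨N, hN, hAN⟩ hAc
    exact (mem_filter.1 hN).2.1 (hΔ _ hAc N (subset_compl_comm.1 hAN))
  · intro hAc
    obtain ⟨N, hN, hNA⟩ := exists_minNonfaces_subset hAc
    exact ⟨N, hN, subset_compl_comm.1 hNA⟩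

end

theorem stmt3_general {d n : ℕ} (hn : n = 2 * d)
    (Δ : Finset (Finset (Fin n))) (hΔ : IsComplex Δ) (hpure : PureDim d Δ)
    (hf : IsFComplex Δ) (hwd : facets Δ ∩ facets (cdual Δ) = ∅) :
    adual Δ = Δ := by
  ext A
  rw [mem_adual_iff hΔ.2]
  exact (mem_iff_compl_notMem hn hf hpure hwd).symm

/-- a well-distributed `f`-simplicial complex `Δ` (`n = 2d`, `Δ` pure
`(d-1)`-dimensional, `F(Δ) ∩ F(Δ^c) = ∅`) equals its own Alexander dual. -/
theorem stmt3 {d n : ℕ} (hd : 1 ≤ d) (hn : n = 2 * d)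
    (Δ : Finset (Finset (Fin n))) (hΔ : IsComplex Δ) (hpure : PureDim d Δ)
    (hf : IsFComplex Δ) (hwd : facets Δ ∩ facets (cdual Δ) = ∅) :
    adual Δ = Δ :=
  stmt3_general hn Δ hΔ hpure hf hwd
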